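/- Let G = C_{n_1} × ... × C_{n_k} with 1 < n_1 | n_2 | ... | n_k. If there exists a family {H_i}_{i∈I} of subgroups of G with trivial intersection, whose union generates G, and such that all quotients G/H_i have the same exponent, then k ≥ 2 and n_{k-1} = n_k. -/

import Mathlib

/-!
Since the `H i` meet trivially, `G` embeds into `∏ G ⧸ H i`, so the common exponent of the
quotients is `exp G = n_k`. If the conclusion failed, some prime `p` would give `m = n_k / p` with
`n_i ∣ m` for all `i < k`; then all `m`-th powers lie in a subgroup `K` of order `p`. A quotient
`G ⧸ H i` of exponent `n_k ∤ m` forces `K ⊄ H i`, hence `K ⊓ H i = ⊥`, so `g ^ m = 1` on every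
`H i`, hence on `⨆ i, H i = G`, contradicting `exp G = n_k`.
-/

/-- The abelian group with invariant factors `n 0 ∣ n 1 ∣ ... ∣ n (k-1)`. -/
abbrev IG (k : ℕ) (n : Fin k → ℕ) := ∀ i : Fin k, Multiplicative (ZMod (n i))

open Subgroup Multiplicative

section Exponent

variable {G : Type*} [CommGroup G]

lemma exponent_dvd_exponent_quotient_of_iInf_eq_bot {I : Type*} {H : I → Subgroup G}
    (hinf : ⨅ i, H i = ⊥)
    (hexp : ∀ i j, Monoid.exponent (G ⧸ H i) = Monoid.exponent (G ⧸ H j)) (i : I) :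
    Monoid.exponent G ∣ Monoid.exponent (G ⧸ H i) := by
  refine Monoid.exponent_dvd_of_forall_pow_eq_one fun g => ?_
  have hmem : g ^ Monoid.exponent (G ⧸ H i) ∈ ⨅ j, H j := mem_iInf.mpr fun j => by
    rw [hexp i j, ← QuotientGroup.eq_one_iff, QuotientGroup.mk_pow]
    exact Monoid.pow_exponent_eq_one _
  rwa [hinf, mem_bot] at hmem

lemma pow_eq_one_of_mem_of_pow_mem_of_card_prime {K H : Subgroup G} (hK : (Nat.card K).Prime)
    {m : ℕ} (hpow : ∀ g : G, g ^ m ∈ K) (hH : ¬ Monoid.exponent (G ⧸ H) ∣ m) {g : G}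
    (hg : g ∈ H) : g ^ m = 1 := by
  have : Fact (Nat.card K).Prime := ⟨hK⟩
  rcases (H.subgroupOf K).eq_bot_or_eq_top_of_prime_card with hbot | htop
  · have hmem : (⟨g ^ m, hpow g⟩ : K) ∈ H.subgroupOf K := H.pow_mem hg m
    rw [hbot, mem_bot] at hmem
    exact congrArg Subtype.val hmem
  · refine absurd (Monoid.exponent_dvd_of_forall_pow_eq_one fun x => ?_) hH
    induction x using QuotientGroup.induction_on with
    | H w =>
      rw [← QuotientGroup.mk_pow, QuotientGroup.eq_one_iff]
      exact subgroupOf_eq_top.mp htop (hpow w)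

theorem exponent_dvd_of_pow_mem_of_card_prime {I : Type*} {H : I → Subgroup G}
    (hinf : ⨅ i, H i = ⊥) (hsup : ⨆ i, H i = ⊤)
    (hexp : ∀ i j, Monoid.exponent (G ⧸ H i) = Monoid.exponent (G ⧸ H j))
    {K : Subgroup G} (hK : (Nat.card K).Prime) {m : ℕ} (hpow : ∀ g : G, g ^ m ∈ K) :
    Monoid.exponent G ∣ m := by
  by_contra hm
  have hker : ⨆ i, H i ≤ (powMonoidHom m : G →* G).ker :=
    iSup_le fun i _ hg => pow_eq_one_of_mem_of_pow_mem_of_card_prime hK hpow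
      (fun h => hm ((exponent_dvd_exponent_quotient_of_iInf_eq_bot hinf hexp i).trans h)) hg
  exact hm (Monoid.exponent_dvd_of_forall_pow_eq_one fun g => hker (hsup ▸ mem_top g))

end Exponent

section ZModPi

variable {ι : Type*} [DecidableEq ι] {n : ι → ℕ}

lemma orderOf_mulSingle_ofAdd_natCast (j : ι) (hj : n j ≠ 0) {m : ℕ} (hm : m ∣ n j) :
    orderOf (Pi.mulSingle j (ofAdd (m : ZMod (n j))) : ∀ i, Multiplicative (ZMod (n i))) =
      n j / m := by
  rw [orderOf_piMulSingle, orderOf_ofAdd_eq_addOrderOf, ZMod.addOrderOf_coe _ hj,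
    Nat.gcd_eq_right hm]

lemma pow_eq_mulSingle_pow (j : ι) [NeZero (n j)] {m : ℕ} (hm : ∀ i ≠ j, n i ∣ m)
    (g : ∀ i, Multiplicative (ZMod (n i))) :
    g ^ m = Pi.mulSingle j (ofAdd (m : ZMod (n j))) ^ (toAdd (g j)).val := by
  funext i
  rcases eq_or_ne i j with rfl | hi
  · rw [Pi.pow_apply, Pi.pow_apply, Pi.mulSingle_eq_same, ← ofAdd_toAdd (g i), ← ofAdd_nsmul,
      ← ofAdd_nsmul, nsmul_eq_mul, nsmul_eq_mul, ZMod.natCast_zmod_val, toAdd_ofAdd, mul_comm]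
  · obtain ⟨c, rfl⟩ := hm i hi
    rw [Pi.pow_apply, Pi.pow_apply, Pi.mulSingle_eq_of_ne hi, one_pow, pow_mul,
      ← ofAdd_toAdd (g i), ← ofAdd_nsmul, nsmul_eq_mul, ZMod.natCast_self, zero_mul, ofAdd_zero,
      one_pow]

end ZModPi

lemma Nat.exists_prime_dvd_div_of_dvd_of_ne {a b : ℕ} (hab : a ∣ b) (hne : a ≠ b) (hb : b ≠ 0) :
    ∃ p, p.Prime ∧ p ∣ b ∧ a ∣ b / p := by
  obtain ⟨t, rfl⟩ := hab
  have ht : t ≠ 1 := by rintro rfl; exact hne (mul_one a).symm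
  refine ⟨t.minFac, Nat.minFac_prime ht, dvd_mul_of_dvd_right t.minFac_dvd a, ?_⟩
  rw [Nat.mul_div_assoc _ t.minFac_dvd]
  exact dvd_mul_right a _

lemma exists_proper_dvd_of_isTop {k : ℕ} {n : Fin k → ℕ} (hdvd : ∀ i j : Fin k, i ≤ j → n i ∣ n j)
    {L : Fin k} (hL : IsTop L) (hL1 : n L ≠ 1) (hne : ∀ J : Fin k, (J : ℕ) + 1 = L → n J ≠ n L) :
    ∃ a, a ∣ n L ∧ a ≠ n L ∧ ∀ i, i ≠ L → n i ∣ a := by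
  have hle (i : Fin k) : (i : ℕ) ≤ L := hL i
  rcases Nat.eq_zero_or_pos (L : ℕ) with hL0 | hLpos
  · exact ⟨1, one_dvd _, hL1.symm, fun i hi => absurd (Fin.ext (by have := hle i; omega)) hi⟩
  · let J : Fin k := ⟨L - 1, by omega⟩
    refine ⟨n J, hdvd J L (hL J), hne J (by simp only [J]; omega), fun i hi => hdvd i J ?_⟩
    have hiL := Fin.val_ne_of_ne hi
    have := hle i
    exact Fin.le_def.mpr (by simp only [J]; omega)

theorem stmt_7 (k : ℕ) (hk : 1 ≤ k) (n : Fin k → ℕ)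
    (h1 : ∀ i, 1 < n i) (hdvd : ∀ i j : Fin k, i ≤ j → n i ∣ n j)
    (h : ∃ (I : Type) (H : I → Subgroup (IG k n)),
      (⨅ i, H i) = ⊥ ∧ (⨆ i, H i) = ⊤ ∧
      ∀ i j : I, Monoid.exponent (IG k n ⧸ H i) = Monoid.exponent (IG k n ⧸ H j)) :
    ∃ _ : 2 ≤ k, n ⟨k - 2, by omega⟩ = n ⟨k - 1, by omega⟩ := by
  by_contra hcon
  obtain ⟨I, H, hinf, hsup, hexp⟩ := h
  set L : Fin k := ⟨k - 1, by omega⟩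
  have hL : n L ≠ 0 := (zero_lt_one.trans (h1 L)).ne'
  have : NeZero (n L) := ⟨hL⟩
  have hne (J : Fin k) (hJ : (J : ℕ) + 1 = L) : n J ≠ n L := fun h => by
    have hJ' : (J : ℕ) = k - 2 := by simp only [L] at hJ; omega
    exact hcon ⟨by omega, by rwa [show (⟨k - 2, by omega⟩ : Fin k) = J from Fin.ext hJ'.symm]⟩
  obtain ⟨a, haL, hane, hai⟩ :=
    exists_proper_dvd_of_isTop hdvd (fun _ => Fin.mk_le_mk.mpr (by omega)) (h1 L).ne' hne
  obtain ⟨p, hp, hpL, hap⟩ := Nat.exists_prime_dvd_div_of_dvd_of_ne haL hane hL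
  set z : IG k n := Pi.mulSingle L (ofAdd ((n L / p : ℕ) : ZMod (n L)))
  have hz : orderOf z = p := by
    rw [orderOf_mulSingle_ofAdd_natCast L hL (Nat.div_dvd_of_dvd hpL), Nat.div_div_self hpL hL]
  have hexpG : Monoid.exponent (IG k n) ∣ n L / p := by
    refine exponent_dvd_of_pow_mem_of_card_prime hinf hsup hexp (K := zpowers z)
      (by rwa [Nat.card_zpowers, hz]) fun g => ?_
    rw [pow_eq_mulSingle_pow L (fun i hi => (hai i hi).trans hap) g]
    exact npow_mem_zpowers z _
  have hm : ¬ n L ∣ n L / p :=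
    Nat.not_dvd_of_pos_of_lt (Nat.div_pos (Nat.le_of_dvd (Nat.pos_of_ne_zero hL) hpL) hp.pos)
      (Nat.div_lt_self (Nat.pos_of_ne_zero hL) hp.one_lt)
  refine hm (calc
    n L = orderOf (Pi.mulSingle L (ofAdd ((1 : ℕ) : ZMod (n L))) : IG k n) := by
      rw [orderOf_mulSingle_ofAdd_natCast L hL (one_dvd _), Nat.div_one]
    _ ∣ Monoid.exponent (IG k n) := Monoid.order_dvd_exponent _
    _ ∣ n L / p := hexpG)
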